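/- Let (X,Y,Z) : I → ℝ³ be a solution of the system (S) on an interval I unbounded above, with X(η) > 0 and Z(η) ≥ 0 for all η ∈ I, and suppose (X,Y,Z)(η) → P0^λ = (0, λ, −λ² − (β/α)λ) as η → +∞ for some λ ∈ (−β/α, −β/(2α)). Then Y(η) < −β/(2α) for every η ∈ I. -/

import Mathlib

open Real Set Filter Topology

/-- The self-similar exponent `α = (σ+2)/((σ-2)(m-1))`. -/
noncomputable def ssAlpha (m σ : ℝ) : ℝ := (σ + 2) / ((σ - 2) * (m - 1))

/-- The self-similar exponent `β = 2/(σ-2)`. -/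
noncomputable def ssBeta (σ : ℝ) : ℝ := 2 / (σ - 2)

/-- `(X,Y,Z)` satisfies the quadratic system (S) at time `η`:
`X' = X((m−1)Y − 2X)`, `Y' = −Y² − (β/α)Y + X − XY − Z`, `Z' = (σ−2)XZ`. -/
def SysAt (m σ : ℝ) (X Y Z : ℝ → ℝ) (η : ℝ) : Prop :=
  HasDerivAt X (X η * ((m - 1) * Y η - 2 * X η)) η ∧
  HasDerivAt Y (-(Y η) ^ 2 - ssBeta σ / ssAlpha m σ * Y η + X η - X η * Y η - Z η) η ∧
  HasDerivAt Z ((σ - 2) * X η * Z η) η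

/-- The equilibrium `P0^λ = (0, λ, −λ² − (β/α)λ)` on the critical parabola. -/
noncomputable def P0pt (m σ l : ℝ) : ℝ × ℝ × ℝ :=
  (0, l, -l ^ 2 - ssBeta σ / ssAlpha m σ * l)

/-- The equilibrium `P2 = ((m−1)/(2(m+1)α), 1/((m+1)α), 0)`. -/
noncomputable def P2pt (m σ : ℝ) : ℝ × ℝ × ℝ :=
  ((m - 1) / (2 * (m + 1) * ssAlpha m σ), 1 / ((m + 1) * ssAlpha m σ), 0)

/-!
Along the orbit `Z' = (σ-2)XZ ≥ 0`, so `Z` increases to its limit `-λ² - (β/α)λ` and stays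
below it. On the plane `Y = -β/(2α)` this bound gives
`Y' = (λ + β/(2α))² + X(1 + β/(2α)) + (-λ² - (β/α)λ - Z) > 0`,
so the orbit can cross that plane only upwards. As `Y → λ < -β/(2α)`, it was never on or above it.
-/

theorem HasDerivAt.eventually_nhdsGT_lt {f : ℝ → ℝ} {f' x : ℝ} (hf : HasDerivAt f f' x)
    (hf' : 0 < f') : ∀ᶠ y in 𝓝[>] x, f x < f y := by
  have hslope := (hasDerivAt_iff_tendsto_slope.mp hf).mono_left (nhdsGT_le_nhdsNE x)
  filter_upwards [hslope.eventually (eventually_gt_nhds hf'), self_mem_nhdsWithin]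
    with y hpos hxy
  exact (slope_pos_iff_of_le (le_of_lt hxy)).mp hpos

theorem forall_Ici_lt_of_eventually_lt {f f' : ℝ → ℝ} {a c : ℝ}
    (hf : ∀ x ∈ Ici a, HasDerivAt f (f' x) x) (hcross : ∀ x ∈ Ici a, f x = c → 0 < f' x)
    (hev : ∀ᶠ x in atTop, f x < c) : ∀ x ∈ Ici a, f x < c := by
  intro x₀ hx₀
  by_contra! hcx₀
  obtain ⟨b, hb⟩ := eventually_atTop.mp hev
  set b' := max b x₀
  have hcont : ContinuousOn f (Icc x₀ b') := fun x hx =>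
    (hf x (le_trans hx₀ hx.1)).continuousAt.continuousWithinAt
  -- `t` is the last time in `[x₀, b']` at which `c ≤ f`.
  obtain ⟨t, ⟨htI, hct⟩, htmax⟩ :=
    (isCompact_Icc.of_isClosed_subset (hcont.preimage_isClosed_of_isClosed isClosed_Icc
      isClosed_Ici) inter_subset_left).exists_isGreatest
      ⟨x₀, ⟨left_mem_Icc.mpr (le_max_right b x₀), hcx₀⟩⟩
  have hta : t ∈ Ici a := le_trans hx₀ htI.1
  have hafter : ∀ y, t < y → f y < c := by
    intro y hty
    by_cases hyb : y ≤ b'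
    · by_contra! hcy
      exact (htmax ⟨⟨htI.1.trans hty.le, hyb⟩, hcy⟩).not_gt hty
    · exact hb y ((le_max_left b x₀).trans (not_le.mp hyb).le)
  have hft : f t = c :=
    le_antisymm (le_of_tendsto ((hf t hta).continuousAt.continuousWithinAt (s := Ioi t))
      (eventually_nhdsWithin_of_forall fun y hy => (hafter y hy).le)) hct
  obtain ⟨y, hty, hy⟩ :=
    (((hf t hta).eventually_nhdsGT_lt (hcross t hta hft)).and self_mem_nhdsWithin).exists
  exact (hafter y hy).not_gt (hft ▸ hty)

theorem MonotoneOn.le_of_tendsto_atTop {α β : Type*} [Preorder α] [Nonempty α]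
    [IsDirectedOrder α] [Preorder β] [TopologicalSpace β] [OrderClosedTopology β]
    {f : α → β} {a b : α} {L : β} (hf : MonotoneOn f (Ici a)) (hb : b ∈ Ici a)
    (hL : Tendsto f atTop (𝓝 L)) : f b ≤ L :=
  ge_of_tendsto hL (by
    filter_upwards [eventually_ge_atTop b] with x hx using hf hb (le_trans hb hx) hx)

theorem ssBeta_div_ssAlpha_pos {m σ : ℝ} (hm : 1 < m) (hσ : 2 < σ) :
    0 < ssBeta σ / ssAlpha m σ := by
  unfold ssBeta ssAlpha
  have hm' : 0 < m - 1 := by linarith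
  have hσ' : 0 < σ - 2 := by linarith
  positivity

/-- The right-hand side of `Y'` in (S), with `k = β/α`, on the plane `Y = -k/2`. -/
theorem rhsY_pos_of_eq_neg_half {k l x z : ℝ} (hk : 0 ≤ k) (hl : l < -(k / 2)) (hx : 0 ≤ x)
    (hz : z ≤ -l ^ 2 - k * l) :
    0 < -(-(k / 2)) ^ 2 - k * -(k / 2) + x - x * -(k / 2) - z := by
  have hsq : 0 < (l + k / 2) ^ 2 := by nlinarith
  nlinarith [mul_nonneg hx hk]

theorem orbit_to_lower_parabola_stays_below_general
    (m σ : ℝ) (hm1 : 1 < m) (hσ : 2 < σ)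
    (a l : ℝ)
    (hl2 : l < -(ssBeta σ / (2 * ssAlpha m σ)))
    (X Y Z : ℝ → ℝ)
    (hsol : ∀ η ∈ Ici a, SysAt m σ X Y Z η)
    (hX : ∀ η ∈ Ici a, 0 < X η)
    (hZ : ∀ η ∈ Ici a, 0 ≤ Z η)
    (hlim : Tendsto (fun η => (X η, Y η, Z η)) atTop (𝓝 (P0pt m σ l))) :
    ∀ η ∈ Ici a, Y η < -(ssBeta σ / (2 * ssAlpha m σ)) := by
  rw [div_mul_eq_div_div_swap] at hl2 ⊢
  set k := ssBeta σ / ssAlpha m σ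
  have hk : 0 < k := ssBeta_div_ssAlpha_pos hm1 hσ
  have hYlim : Tendsto Y atTop (𝓝 l) := hlim.snd_nhds.fst_nhds
  have hZlim : Tendsto Z atTop (𝓝 (-l ^ 2 - k * l)) := hlim.snd_nhds.snd_nhds
  have hZmono : MonotoneOn Z (Ici a) :=
    monotoneOn_of_hasDerivWithinAt_nonneg (convex_Ici a)
      (fun η hη => (hsol η hη).2.2.continuousAt.continuousWithinAt)
      (fun η hη => (hsol η (interior_subset hη)).2.2.hasDerivWithinAt)
      (fun η hη => mul_nonneg (mul_nonneg (by linarith) (hX η (interior_subset hη)).le)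
        (hZ η (interior_subset hη)))
  refine forall_Ici_lt_of_eventually_lt (fun η hη => (hsol η hη).2.1) (fun η hη hYη => ?_)
    (hYlim.eventually (eventually_lt_nhds hl2))
  rw [hYη]
  exact rhsY_pos_of_eq_neg_half hk.le hl2 (hX η hη).le (hZmono.le_of_tendsto_atTop hη hZlim)

/-- an orbit with `X > 0`, `Z ≥ 0` converging as `η → +∞` to a point
`P0^λ` with `λ ∈ (−β/α, −β/(2α))` stays forever in the half-space `{Y < −β/(2α)}`. -/
theorem orbit_to_lower_parabola_stays_below
    (m σ : ℝ) (hm1 : 1 < m) (hm2 : m < 2) (hσ : 2 < σ)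
    (a l : ℝ)
    (hl1 : -(ssBeta σ / ssAlpha m σ) < l)
    (hl2 : l < -(ssBeta σ / (2 * ssAlpha m σ)))
    (X Y Z : ℝ → ℝ)
    (hsol : ∀ η ∈ Ici a, SysAt m σ X Y Z η)
    (hX : ∀ η ∈ Ici a, 0 < X η)
    (hZ : ∀ η ∈ Ici a, 0 ≤ Z η)
    (hlim : Tendsto (fun η => (X η, Y η, Z η)) atTop (𝓝 (P0pt m σ l))) :
    ∀ η ∈ Ici a, Y η < -(ssBeta σ / (2 * ssAlpha m σ)) :=
  orbit_to_lower_parabola_stays_below_general m σ hm1 hσ a l hl2 X Y Z hsol hX hZ hlim
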